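/- arXiv:1002.1852 — 2 statements merged into one kernel-verified Lean document; each statement's English description precedes it below -/
import Mathlib

section
/- Let n ≥ 1, let Ā_N ∈ GL(n,ℤ), and let H ⊆ ℤ^n be a subgroup with Ā_N(H) = H. Set G := ℤ^n/H, and for v̄ ∈ ℤ^n define β_v̄ : G → G by β_v̄([ū]) := [Ā_N(ū − v̄)]. If v̄' − v̄ ∈ H + (Ā_N − I)(ℤ^n), then there exists a bijection k : G → G of the form k(g) = φ(g) + c, where φ is a group automorphism of G and c ∈ G, such that k ∘ β_v̄ = β_v̄' ∘ k. -/
theorem reidemeister_selfmaps_equivalent (n : ℕ) (hn : 1 ≤ n)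
    (AN : Matrix (Fin n) (Fin n) ℤ) (hAN : IsUnit AN.det)
    (H : AddSubgroup (Fin n → ℤ))
    (hH : AddSubgroup.map (Matrix.mulVecLin AN).toAddMonoidHom H = H)
    (v v' : Fin n → ℤ)
    (hv : v' - v ∈ H ⊔ AddMonoidHom.range (Matrix.mulVecLin (AN - 1)).toAddMonoidHom)
    (β β' : ((Fin n → ℤ) ⧸ H) → ((Fin n → ℤ) ⧸ H))
    (hβ : ∀ u : Fin n → ℤ, β (QuotientAddGroup.mk u) = QuotientAddGroup.mk (AN.mulVec (u - v)))
    (hβ' : ∀ u : Fin n → ℤ,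
      β' (QuotientAddGroup.mk u) = QuotientAddGroup.mk (AN.mulVec (u - v'))) :
    ∃ (φ : ((Fin n → ℤ) ⧸ H) ≃+ ((Fin n → ℤ) ⧸ H)) (c : (Fin n → ℤ) ⧸ H),
      ∀ g, φ (β g) + c = β' (φ g + c) := by
  rw [AddSubgroup.mem_sup] at hv
  obtain ⟨h, hh, z, hz, hhz⟩ := hv
  obtain ⟨x, hx⟩ := hz
  refine ⟨AddEquiv.refl _, QuotientAddGroup.mk (AN.mulVec x), fun g => ?_⟩
  induction g using QuotientAddGroup.induction_on with
  | H u =>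
  simp only [AddEquiv.refl_apply, hβ]
  rw [show (QuotientAddGroup.mk u : (Fin n → ℤ) ⧸ H) + QuotientAddGroup.mk (AN.mulVec x)
      = QuotientAddGroup.mk (u + AN.mulVec x) from rfl, hβ']
  rw [show (QuotientAddGroup.mk (AN.mulVec (u - v)) : (Fin n → ℤ) ⧸ H)
      + QuotientAddGroup.mk (AN.mulVec x)
      = QuotientAddGroup.mk (AN.mulVec (u - v) + AN.mulVec x) from rfl]
  rw [QuotientAddGroup.eq]
  have key : -(AN.mulVec (u - v) + AN.mulVec x) + AN.mulVec (u + AN.mulVec x - v')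
      = -(AN.mulVec h) := by
    have hx' : (AN - 1).mulVec x = z := hx
    have hz' : AN.mulVec x - x = z := by
      rw [← hx', Matrix.sub_mulVec, Matrix.one_mulVec]
    have hvv : v' = h + z + v := by rw [hhz]; ring
    rw [hvv]
    simp only [Matrix.mulVec_sub, Matrix.mulVec_add, ← hz']
    ring
  rw [key]
  exact neg_mem (by
    rw [← hH]
    exact ⟨h, hh, rfl⟩)
end

section
/- Let k, l ∈ ℤ be not both zero, and let η : G → G be the group endomorphism given by multiplication by 1+i, i.e. η([z]) := [(1+i)z]. If k+l is odd, then η is bijective. If k+l is even, then the kernel of η has exactly two elements, the map ζ : G → ℤ/2ℤ sending the class of z₁+iz₂ to z₁+z₂ modulo 2 is a well-defined surjective group homomorphism, and the image of η equals the kernel of ζ (so the image of η has index 2 in G). -/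
noncomputable def gEquiv : GaussianInt ≃ₗ[ℤ] ℤ × ℤ where
  toFun z := (z.re, z.im)
  invFun p := ⟨p.1, p.2⟩
  left_inv z := by ext <;> rfl
  right_inv p := rfl
  map_add' z w := by simp [Zsqrtd.re_add, Zsqrtd.im_add]
  map_smul' n z := by simp [zsmul_eq_mul, Zsqrtd.re_mul, Zsqrtd.im_mul]

instance : Module.Free ℤ GaussianInt := Module.Free.of_equiv gEquiv.symm
instance : Module.Finite ℤ GaussianInt := Module.Finite.equiv gEquiv.symm

def phi : GaussianInt →+* ZMod 2 where
  toFun z := ((z.re + z.im : ℤ) : ZMod 2)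
  map_one' := by norm_num
  map_zero' := by norm_num
  map_add' z w := by
    simp only [Zsqrtd.re_add, Zsqrtd.im_add]
    push_cast; ring
  map_mul' z w := by
    simp only [Zsqrtd.re_mul, Zsqrtd.im_mul]
    rw [← sub_eq_zero, ← Int.cast_mul, ← Int.cast_sub, ZMod.intCast_zmod_eq_zero_iff_dvd]
    exact ⟨-z.im * w.im, by ring⟩

lemma phi_apply (z : GaussianInt) : phi z = ((z.re + z.im : ℤ) : ZMod 2) := rfl

lemma phi_one_one : phi (⟨1,1⟩ : GaussianInt) = 0 := by
  rw [phi_apply]; decide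

lemma phi_eq_zero_iff (z : GaussianInt) : phi z = 0 ↔ (⟨1,1⟩ : GaussianInt) ∣ z := by
  constructor
  · intro h
    rw [phi_apply, ZMod.intCast_zmod_eq_zero_iff_dvd] at h
    obtain ⟨c, hc⟩ := h
    exact ⟨⟨c, c - z.re⟩, by ext <;> simp [Zsqrtd.re_mul, Zsqrtd.im_mul] <;> omega⟩
  · rintro ⟨c, rfl⟩
    rw [map_mul, phi_one_one, zero_mul]

lemma one_one_ne_zero : (⟨1,1⟩ : GaussianInt) ≠ 0 := by
  intro h
  have := congrArg Zsqrtd.re h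
  simp at this

theorem gaussian_main (k l : ℤ) (hkl : ¬(k = 0 ∧ l = 0)) :
    (Odd (k + l) → Function.Bijective
      (fun g : GaussianInt ⧸ Ideal.span {(⟨k, l⟩ : GaussianInt)} =>
        Ideal.Quotient.mk _ (⟨1, 1⟩ : GaussianInt) * g)) ∧
    (Even (k + l) →
      Nat.card {g : GaussianInt ⧸ Ideal.span {(⟨k, l⟩ : GaussianInt)} //
        Ideal.Quotient.mk _ (⟨1, 1⟩ : GaussianInt) * g = 0} = 2 ∧
      ∃ ζ : (GaussianInt ⧸ Ideal.span {(⟨k, l⟩ : GaussianInt)}) →+ ZMod 2,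
        (∀ z : GaussianInt, ζ (Ideal.Quotient.mk _ z) = ((z.re + z.im : ℤ) : ZMod 2)) ∧
        Function.Surjective ζ ∧
        Set.range (fun g => Ideal.Quotient.mk _ (⟨1, 1⟩ : GaussianInt) * g)
          = {g | ζ g = 0}) := by
  set w : GaussianInt := ⟨k, l⟩ with hw
  have hwne : w ≠ 0 := by
    intro h
    exact hkl ⟨congrArg Zsqrtd.re h, congrArg Zsqrtd.im h⟩
  set J : Ideal GaussianInt := Ideal.span {w} with hJ
  have hJne : J ≠ ⊥ := by
    rw [hJ, Ne, Ideal.span_singleton_eq_bot]; exact hwne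
  letI : Fintype (GaussianInt ⧸ J) := @Fintype.ofFinite _ (Ideal.finiteQuotientOfFreeOfNeBot J hJne)
  have mem_iff : ∀ z : GaussianInt, Ideal.Quotient.mk J z = 0 ↔ w ∣ z := by
    intro z
    rw [Ideal.Quotient.eq_zero_iff_mem, hJ, Ideal.mem_span_singleton]
  constructor
  · -- odd case
    intro hodd
    have hphiw : phi w ≠ 0 := by
      rw [phi_apply]
      intro h
      rw [ZMod.intCast_zmod_eq_zero_iff_dvd] at h
      have h' : 2 ∣ k + l := h
      obtain ⟨j, hj⟩ := hodd
      omega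
    rw [Fintype.bijective_iff_injective_and_card]
    refine ⟨?_, rfl⟩
    intro a b hab
    obtain ⟨x, rfl⟩ := Ideal.Quotient.mk_surjective a
    obtain ⟨y, rfl⟩ := Ideal.Quotient.mk_surjective b
    replace hab : Ideal.Quotient.mk J ((⟨1,1⟩ : GaussianInt) * x)
        = Ideal.Quotient.mk J ((⟨1,1⟩ : GaussianInt) * y) := by
      rw [map_mul, map_mul]; exact hab
    rw [Ideal.Quotient.eq, ← mul_sub] at hab
    rw [Ideal.Quotient.eq]
    rw [hJ, Ideal.mem_span_singleton] at hab ⊢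
    obtain ⟨c, hc⟩ := hab
    have hphic : phi c = 0 := by
      have := congrArg phi hc
      rw [map_mul, map_mul, phi_one_one, zero_mul] at this
      rcases mul_eq_zero.mp this.symm with h | h
      · exact absurd h hphiw
      · exact h
    obtain ⟨d, rfl⟩ := (phi_eq_zero_iff c).mp hphic
    refine ⟨d, mul_left_cancel₀ one_one_ne_zero ?_⟩
    rw [hc]; ring
  · -- even case
    intro heven
    obtain ⟨n, hn⟩ := heven
    set m : GaussianInt := ⟨n, l - n⟩ with hm
    have hwm : w = ⟨1,1⟩ * m := by
      ext <;> simp [hw, hm, Zsqrtd.re_mul, Zsqrtd.im_mul] <;> omega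
    have hmne : m ≠ 0 := by
      intro h
      rw [h, mul_zero] at hwm
      exact hwne hwm
    -- ζ
    have hker : ∀ a ∈ J, phi a = 0 := by
      intro a ha
      rw [hJ, Ideal.mem_span_singleton] at ha
      obtain ⟨c, rfl⟩ := ha
      rw [map_mul, phi_apply]
      have : ((k + l : ℤ) : ZMod 2) = 0 := by
        rw [ZMod.intCast_zmod_eq_zero_iff_dvd]
        exact ⟨n, by omega⟩
      simp only [hw]
      rw [this, zero_mul]
    set zeta : (GaussianInt ⧸ J) →+* ZMod 2 := Ideal.Quotient.lift J phi hker with hz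
    have hzmk : ∀ z : GaussianInt, zeta (Ideal.Quotient.mk J z) = ((z.re + z.im : ℤ) : ZMod 2) := by
      intro z
      rw [hz, Ideal.Quotient.lift_mk, phi_apply]
    -- kernel set
    have hmkm : Ideal.Quotient.mk J m ≠ 0 := by
      rw [Ne, mem_iff]
      rintro ⟨c, hc⟩
      have h1 : m * ((⟨1,1⟩ : GaussianInt) * c) = m * 1 := by
        conv_rhs => rw [mul_one, hc, hwm]
        ring
      have h2 : (⟨1,1⟩ : GaussianInt) * c = 1 := mul_left_cancel₀ hmne h1
      have h3 := congrArg phi h2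
      rw [map_one, map_mul, phi_one_one, zero_mul] at h3
      exact (by decide : (1 : ZMod 2) ≠ 0) h3.symm
    have hset : {g : GaussianInt ⧸ J | Ideal.Quotient.mk J (⟨1,1⟩ : GaussianInt) * g = 0}
        = {0, Ideal.Quotient.mk J m} := by
      ext g
      simp only [Set.mem_setOf_eq, Set.mem_insert_iff, Set.mem_singleton_iff]
      constructor
      · intro hg
        obtain ⟨z, rfl⟩ := Ideal.Quotient.mk_surjective g
        rw [← map_mul, mem_iff] at hg
        obtain ⟨c, hc⟩ := hg
        rw [hwm, mul_assoc] at hc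
        have hzc : z = m * c := mul_left_cancel₀ one_one_ne_zero hc
        rcases (by decide : ∀ x : ZMod 2, x = 0 ∨ x = 1) (phi c) with h | h
        · left
          obtain ⟨d, rfl⟩ := (phi_eq_zero_iff c).mp h
          rw [mem_iff, hzc, hwm]
          exact ⟨d, by ring⟩
        · right
          rw [Ideal.Quotient.eq, hJ, Ideal.mem_span_singleton, hwm]
          have : phi (c - 1) = 0 := by rw [map_sub, h, map_one, sub_self]
          obtain ⟨d, hd⟩ := (phi_eq_zero_iff _).mp this
          refine ⟨d, ?_⟩
          have : c = 1 + ⟨1,1⟩ * d := by rw [← hd]; ring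
          rw [hzc, this]; ring
      · rintro (rfl | rfl)
        · rw [mul_zero]
        · rw [← map_mul, ← hwm, mem_iff]
    constructor
    · -- card
      have : Nat.card {g : GaussianInt ⧸ J // Ideal.Quotient.mk J (⟨1,1⟩ : GaussianInt) * g = 0}
          = ({0, Ideal.Quotient.mk J m} : Set (GaussianInt ⧸ J)).ncard := by
        rw [← hset]
        exact Nat.card_coe_set_eq _
      rw [this, Set.ncard_pair (Ne.symm hmkm)]
    · exact ⟨zeta.toAddMonoidHom, hzmk, by
        intro x
        rcases (by decide : ∀ x : ZMod 2, x = 0 ∨ x = 1) x with h | h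
        · exact ⟨0, by rw [h]; exact map_zero _⟩
        · exact ⟨Ideal.Quotient.mk J 1, by rw [h]; simpa using hzmk 1⟩, by
        ext g
        simp only [Set.mem_range, Set.mem_setOf_eq]
        constructor
        · rintro ⟨g', rfl⟩
          obtain ⟨z, rfl⟩ := Ideal.Quotient.mk_surjective g'
          show zeta (Ideal.Quotient.mk J (⟨1,1⟩ : GaussianInt) * Ideal.Quotient.mk J z) = 0
          rw [← map_mul, hz, Ideal.Quotient.lift_mk, map_mul, phi_one_one, zero_mul]
        · intro hg
          obtain ⟨z, rfl⟩ := Ideal.Quotient.mk_surjective g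
          have : phi z = 0 := by
            rw [phi_apply, ← hzmk z]; exact hg
          obtain ⟨d, rfl⟩ := (phi_eq_zero_iff z).mp this
          exact ⟨Ideal.Quotient.mk J d, by rw [← map_mul]⟩⟩

theorem gaussian_eta_kernel_image (k l : ℤ) (hkl : ¬(k = 0 ∧ l = 0)) :
    letI J : Ideal GaussianInt := Ideal.span {(⟨k, l⟩ : GaussianInt)}
    -- `η` is multiplication by `1 + i` on `G = ℤ[i]/(k+il)`
    letI η : (GaussianInt ⧸ J) → (GaussianInt ⧸ J) :=
      fun g => Ideal.Quotient.mk J (⟨1, 1⟩ : GaussianInt) * g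
    (Odd (k + l) → Function.Bijective η) ∧
    (Even (k + l) →
      Nat.card {g : GaussianInt ⧸ J // η g = 0} = 2 ∧
      ∃ ζ : (GaussianInt ⧸ J) →+ ZMod 2,
        (∀ z : GaussianInt, ζ (Ideal.Quotient.mk J z) = ((z.re + z.im : ℤ) : ZMod 2)) ∧
        Function.Surjective ζ ∧
        Set.range η = {g | ζ g = 0}) :=
  gaussian_main k l hkl
end
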